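/- arXiv:1204.3256 — 6 statements merged into one kernel-verified Lean document; each statement's English description precedes it below -/
import Mathlib

section
/- Let α > 2 and θ > 0, and let F be a nonnegative random variable on a probability space with E[F^{2/α}] < ∞. Then ∫₀^∞ (1 − E[ exp(−θ F r^{−α}) ]) · 2πr dr = π Γ(1 − 2/α) · E[F^{2/α}] · θ^{2/α}, where Γ denotes the real Gamma function. -/
/-!
The substitution `y = r ^ (-α)` turns `∫₀^∞ (1 - exp (-c r^{-α})) d r^d` into
`∫₀^∞ (1 - exp (-c y)) s y^{-s-1} dy` with `s = d / α ∈ (0, 1)`, and integrating by parts against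
`-y^{-s}` leaves the Gamma integral `c ∫₀^∞ y^{-s} exp (-c y) dy = Γ(1 - s) c^s`. With `c = θ F` the
integrand is nonnegative and its `r`-integral `Γ(1 - s) (θ F)^s` is integrable in `ω`, so Fubini
exchanges the `r`-integral with the expectation.
-/

open MeasureTheory Real
open Set Filter Topology

lemma integrableOn_one_sub_exp_neg_mul_mul_rpow {s c : ℝ} (hs0 : 0 < s) (hs1 : s < 1)
    (hc : 0 ≤ c) :
    IntegrableOn (fun x => (1 - exp (-(c * x))) * (s * x ^ (-s - 1))) (Ioi 0) := by
  have hmeas : AEStronglyMeasurable (fun x => (1 - exp (-(c * x))) * (s * x ^ (-s - 1))) :=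
    (by fun_prop : Measurable _).aestronglyMeasurable
  have hnonneg : ∀ x : ℝ, 0 < x → 0 ≤ (1 - exp (-(c * x))) * (s * x ^ (-s - 1)) := fun x hx =>
    mul_nonneg (by simpa using mul_nonneg hc hx.le) (by positivity)
  rw [← Ioc_union_Ioi_eq_Ioi zero_le_one]
  refine IntegrableOn.union ?_ ?_
  · -- `1 - e^{-cx} ≤ cx` tames the singularity at `0`
    have hdom : IntegrableOn (fun x : ℝ => c * s * x ^ (-s)) (Ioc 0 1) :=
      ((intervalIntegrable_iff_integrableOn_Ioc_of_le zero_le_one).mp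
        (intervalIntegral.intervalIntegrable_rpow' (by linarith))).const_mul _
    refine hdom.mono' hmeas.restrict ?_
    filter_upwards [ae_restrict_mem measurableSet_Ioc] with x hx
    obtain ⟨hx0, -⟩ := hx
    rw [norm_of_nonneg (hnonneg x hx0)]
    calc (1 - exp (-(c * x))) * (s * x ^ (-s - 1))
        ≤ c * x * (s * x ^ (-s - 1)) := by
          gcongr; linarith [one_sub_le_exp_neg (c * x)]
      _ = c * s * x ^ (-s) := by
          rw [rpow_sub_one hx0.ne']; field_simp
  · have hdom : IntegrableOn (fun x : ℝ => s * x ^ (-s - 1)) (Ioi 1) :=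
      (integrableOn_Ioi_rpow_of_lt (by linarith) zero_lt_one).const_mul _
    refine hdom.mono' hmeas.restrict ?_
    filter_upwards [ae_restrict_mem measurableSet_Ioi] with x (hx : 1 < x)
    rw [norm_of_nonneg (hnonneg x (by linarith))]
    calc (1 - exp (-(c * x))) * (s * x ^ (-s - 1)) ≤ 1 * (s * x ^ (-s - 1)) := by
          gcongr; linarith [exp_pos (-(c * x))]
      _ = s * x ^ (-s - 1) := one_mul _

lemma integral_one_sub_exp_neg_mul_mul_rpow {s c : ℝ} (hs0 : 0 < s) (hs1 : s < 1)
    (hc : 0 ≤ c) :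
    ∫ x in Ioi 0, (1 - exp (-(c * x))) * (s * x ^ (-s - 1)) = Gamma (1 - s) * c ^ s := by
  rcases hc.eq_or_lt with rfl | hc
  · simp [zero_rpow hs0.ne']
  have hu : ∀ x ∈ Ioi (0 : ℝ),
      HasDerivAt (fun x => 1 - exp (-(c * x))) (c * exp (-(c * x))) x := fun x _ => by
    simpa [mul_comm] using (((hasDerivAt_id x).const_mul c).neg.exp).const_sub 1
  have hv : ∀ x ∈ Ioi (0 : ℝ), HasDerivAt (fun x => -x ^ (-s)) (s * x ^ (-s - 1)) x :=
    fun x hx => by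
      simpa using (hasDerivAt_rpow_const (p := -s) (Or.inl (ne_of_gt hx))).fun_neg
  have hu'v : IntegrableOn (fun x => c * exp (-(c * x)) * -x ^ (-s)) (Ioi 0) := by
    have := (integrableOn_rpow_mul_exp_neg_mul_rpow (p := 1) (s := -s) (by linarith)
      one_pos hc).const_mul (-c)
    refine IntegrableOn.congr_fun this (fun x _ => ?_) measurableSet_Ioi
    rw [rpow_one, neg_mul c x]
    ring
  have h_zero : Tendsto (fun x => (1 - exp (-(c * x))) * -x ^ (-s)) (𝓝[>] 0) (𝓝 0) := by
    have hbound : Tendsto (fun x : ℝ => c * x ^ (1 - s)) (𝓝[>] 0) (𝓝 0) := by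
      have := ((continuous_rpow_const (sub_pos.mpr hs1).le).tendsto' 0 0
        (zero_rpow (sub_pos.mpr hs1).ne')).const_mul c
      simpa using tendsto_nhdsWithin_of_tendsto_nhds this
    refine squeeze_zero_norm' ?_ hbound
    filter_upwards [self_mem_nhdsWithin] with x (hx : 0 < x)
    rw [norm_mul, norm_neg, norm_of_nonneg (by simpa using mul_nonneg hc.le hx.le),
      norm_of_nonneg (by positivity)]
    calc (1 - exp (-(c * x))) * x ^ (-s) ≤ c * x * x ^ (-s) := by
          gcongr; linarith [one_sub_le_exp_neg (c * x)]
      _ = c * x ^ (1 - s) := by rw [sub_eq_add_neg, rpow_add hx, rpow_one]; ring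
  have h_infty : Tendsto (fun x => (1 - exp (-(c * x))) * -x ^ (-s)) atTop (𝓝 0) := by
    have h1 : Tendsto (fun x => 1 - exp (-(c * x))) atTop (𝓝 1) := by
      simpa using (tendsto_exp_atBot.comp
        (tendsto_neg_atTop_atBot.comp (tendsto_id.const_mul_atTop hc))).const_sub 1
    simpa using h1.mul (tendsto_rpow_neg_atTop hs0).neg
  rw [integral_Ioi_mul_deriv_eq_deriv_mul hu hv
    (integrableOn_one_sub_exp_neg_mul_mul_rpow hs0 hs1 hc.le) hu'v h_zero h_infty]
  have hGamma : ∫ x in Ioi 0, c * exp (-(c * x)) * -x ^ (-s)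
      = -(c * ∫ x in Ioi 0, x ^ ((1 - s) - 1) * exp (-(c * x))) := by
    rw [← integral_const_mul, ← integral_neg, sub_sub_cancel_left]
    congr 1 with x
    ring
  rw [hGamma, integral_rpow_mul_exp_neg_mul_Ioi (sub_pos.mpr hs1) hc, one_div, inv_rpow hc.le,
    ← rpow_neg hc.le]
  have hpow : c * c ^ (-(1 - s)) = c ^ s := by
    conv_rhs => rw [show s = 1 + -(1 - s) by ring]
    rw [rpow_add hc, rpow_one]
  linear_combination Gamma (1 - s) * hpow

section RpowNegSubstitution

variable {α c d : ℝ}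

lemma one_sub_exp_neg_mul_rpow_neg_eq_comp_rpow (hα : 0 < α) {x : ℝ} (hx : 0 < x) :
    (1 - exp (-(c * x ^ (-α)))) * (d * x ^ (d - 1))
      = (|-α| * x ^ (-α - 1)) •
          ((1 - exp (-(c * x ^ (-α)))) * (d / α * (x ^ (-α)) ^ (-(d / α) - 1))) := by
  have hexp : (x ^ (-α)) ^ (-(d / α) - 1) = x ^ (d + α) := by
    rw [← rpow_mul hx.le]
    congr 1
    field_simp
    ring
  have hmul : x ^ (-α - 1) * x ^ (d + α) = x ^ (d - 1) := by
    rw [← rpow_add hx]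
    ring_nf
  rw [smul_eq_mul, hexp, abs_neg, abs_of_pos hα, ← hmul]
  field_simp

lemma integrableOn_one_sub_exp_neg_mul_rpow_neg (hd : 0 < d) (hdα : d < α) (hc : 0 ≤ c) :
    IntegrableOn (fun r => (1 - exp (-(c * r ^ (-α)))) * (d * r ^ (d - 1))) (Ioi 0) := by
  have hα : 0 < α := hd.trans hdα
  refine (integrableOn_congr_fun (fun r hr => one_sub_exp_neg_mul_rpow_neg_eq_comp_rpow hα hr)
    measurableSet_Ioi).mpr ((integrableOn_Ioi_comp_rpow_iff
      (fun y => (1 - exp (-(c * y))) * (d / α * y ^ (-(d / α) - 1)))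
      (neg_ne_zero.mpr hα.ne')).mpr ?_)
  exact integrableOn_one_sub_exp_neg_mul_mul_rpow (div_pos hd hα) ((div_lt_one hα).mpr hdα) hc

lemma integral_one_sub_exp_neg_mul_rpow_neg (hd : 0 < d) (hdα : d < α) (hc : 0 ≤ c) :
    ∫ r in Ioi 0, (1 - exp (-(c * r ^ (-α)))) * (d * r ^ (d - 1))
      = Gamma (1 - d / α) * c ^ (d / α) := by
  have hα : 0 < α := hd.trans hdα
  refine (setIntegral_congr_fun measurableSet_Ioi
    (fun r hr => one_sub_exp_neg_mul_rpow_neg_eq_comp_rpow hα hr)).trans ?_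
  refine (integral_comp_rpow_Ioi (fun y => (1 - exp (-(c * y))) * (d / α * y ^ (-(d / α) - 1)))
    (neg_ne_zero.mpr hα.ne')).trans ?_
  exact integral_one_sub_exp_neg_mul_mul_rpow (div_pos hd hα) ((div_lt_one hα).mpr hdα) hc

end RpowNegSubstitution

lemma integral_Ioi_integral_one_sub_exp_neg_mul_rpow_neg {Ω : Type*} [MeasurableSpace Ω]
    {μ : Measure Ω} [SFinite μ] {α d : ℝ} (hd : 0 < d) (hdα : d < α) {G : Ω → ℝ}
    (hGm : Measurable G) (hG0 : ∀ ω, 0 ≤ G ω) (hGint : Integrable (fun ω => G ω ^ (d / α)) μ) :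
    ∫ r in Ioi 0, ∫ ω, (1 - exp (-(G ω * r ^ (-α)))) * (d * r ^ (d - 1)) ∂μ
      = Gamma (1 - d / α) * ∫ ω, G ω ^ (d / α) ∂μ := by
  set f : ℝ → Ω → ℝ := fun r ω => (1 - exp (-(G ω * r ^ (-α)))) * (d * r ^ (d - 1))
  have hnorm : ∀ ω, ∫ r in Ioi 0, ‖f r ω‖ = Gamma (1 - d / α) * G ω ^ (d / α) := fun ω => by
    rw [← integral_one_sub_exp_neg_mul_rpow_neg hd hdα (hG0 ω)]
    refine setIntegral_congr_fun measurableSet_Ioi fun r (hr : 0 < r) => norm_of_nonneg ?_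
    have : exp (-(G ω * r ^ (-α))) ≤ 1 :=
      exp_le_one_iff.mpr (neg_nonpos.mpr (mul_nonneg (hG0 ω) (rpow_nonneg hr.le _)))
    exact mul_nonneg (sub_nonneg.mpr this) (by positivity)
  have hint : Integrable (Function.uncurry f) ((volume.restrict (Ioi 0)).prod μ) := by
    refine (integrable_prod_iff' (by fun_prop)).mpr ⟨ae_of_all _ fun ω =>
      integrableOn_one_sub_exp_neg_mul_rpow_neg hd hdα (hG0 ω), ?_⟩
    simpa only [Function.uncurry_apply_pair, hnorm] using hGint.const_mul (Gamma (1 - d / α))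
  rw [integral_integral_swap hint, ← integral_const_mul]
  exact integral_congr_ae <| ae_of_all _ fun ω =>
    integral_one_sub_exp_neg_mul_rpow_neg hd hdα (hG0 ω)

lemma integral_one_sub_exp_neg {Ω : Type*} [MeasurableSpace Ω] {P : Measure Ω}
    [IsProbabilityMeasure P] {X : Ω → ℝ} (hXm : AEStronglyMeasurable X P) (hX0 : ∀ ω, 0 ≤ X ω) :
    ∫ ω, (1 - exp (-X ω)) ∂P = 1 - ∫ ω, exp (-X ω) ∂P := by
  have hexp : Integrable (fun ω => exp (-X ω)) P :=
    .of_bound (continuous_exp.comp_aestronglyMeasurable hXm.neg) 1 (ae_of_all _ fun ω => by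
      rw [norm_of_nonneg (exp_pos _).le]
      exact exp_le_one_iff.mpr (neg_nonpos.mpr (hX0 ω)))
  rw [integral_sub (integrable_const 1) hexp, integral_const, probReal_univ, one_smul]

/-- For `α > 2`, `θ > 0` and a nonnegative random variable `F` with `E[F^{2/α}] < ∞`:
`∫₀^∞ (1 − E[exp(−θ F r^{−α})]) · 2πr dr = π Γ(1 − 2/α) E[F^{2/α}] θ^{2/α}`. -/
theorem integral_one_sub_laplace_fading (α θ : ℝ) (hα : 2 < α) (hθ : 0 < θ)
    {Ω : Type*} [MeasurableSpace Ω] (P : Measure Ω) [IsProbabilityMeasure P]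
    (F : Ω → ℝ) (hFmeas : Measurable F) (hF0 : ∀ ω, 0 ≤ F ω)
    (hFint : Integrable (fun ω => F ω ^ (2 / α)) P) :
    ∫ r in Set.Ioi (0 : ℝ),
        (1 - ∫ ω, Real.exp (-θ * F ω * r ^ (-α)) ∂P) * (2 * Real.pi * r)
      = Real.pi * Real.Gamma (1 - 2 / α) * (∫ ω, F ω ^ (2 / α) ∂P) * θ ^ (2 / α) := by
  have hθF0 : ∀ ω, 0 ≤ θ * F ω := fun ω => mul_nonneg hθ.le (hF0 ω)
  have hθFint : Integrable (fun ω => (θ * F ω) ^ (2 / α)) P := by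
    simpa only [mul_rpow hθ.le (hF0 _)] using hFint.const_mul (θ ^ (2 / α))
  have hlaplace : ∀ r ∈ Ioi (0 : ℝ),
      (1 - ∫ ω, exp (-θ * F ω * r ^ (-α)) ∂P) * (2 * π * r)
        = π * ∫ ω, (1 - exp (-(θ * F ω * r ^ (-α)))) * (2 * r ^ ((2 : ℝ) - 1)) ∂P := by
    intro r hr
    rw [integral_mul_const, integral_one_sub_exp_neg (by fun_prop)
      fun ω => mul_nonneg (hθF0 ω) (rpow_nonneg (le_of_lt hr) _)]
    rw [show (2 : ℝ) - 1 = 1 by norm_num, rpow_one]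
    simp only [neg_mul]
    ring
  calc _ = π * ∫ r in Ioi 0,
        ∫ ω, (1 - exp (-(θ * F ω * r ^ (-α)))) * (2 * r ^ ((2 : ℝ) - 1)) ∂P := by
        rw [setIntegral_congr_fun measurableSet_Ioi hlaplace, integral_const_mul]
    _ = π * (Gamma (1 - 2 / α) * ∫ ω, (θ * F ω) ^ (2 / α) ∂P) := by
        rw [integral_Ioi_integral_one_sub_exp_neg_mul_rpow_neg two_pos hα (by fun_prop) hθF0
          hθFint]
    _ = _ := by
        simp_rw [mul_rpow hθ.le (hF0 _)]
        rw [integral_const_mul]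
        ring
end

section
/- Let 0 < γ < 1, C > 0, λ > 0 and x > 0. Then the series Σ_{n≥0} ((Cλ)^n / n!) · |sin(πnγ)| Γ(nγ) / π · x^{−nγ} (with the n = 0 term taken equal to 1 and Γ the Gamma function) converges; in particular the signed series Σ_{n≥0} ((−Cλ)^n / n!) · (sin(πnγ) Γ(nγ)/π) · x^{−nγ} is absolutely summable. -/
open Real Filter Set

lemma gamma_add_le_aux (γ : ℝ) (hγ0 : 0 ≤ γ) (hγ1 : γ ≤ 1) {z : ℝ} (hz : 0 < z) :
    Real.Gamma (z + γ) ≤ Real.Gamma z * z ^ γ := by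
  have hz1 : (0:ℝ) < z + 1 := by linarith
  have hzγ : (0:ℝ) < z + γ := by linarith
  have hΓz : 0 < Real.Gamma z := Real.Gamma_pos_of_pos hz
  have hΓz1 : 0 < Real.Gamma (z + 1) := Real.Gamma_pos_of_pos hz1
  have hΓzγ : 0 < Real.Gamma (z + γ) := Real.Gamma_pos_of_pos hzγ
  have h := Real.convexOn_log_Gamma.2 (mem_Ioi.2 hz) (mem_Ioi.2 hz1)
      (by linarith : (0:ℝ) ≤ 1 - γ) hγ0 (by ring)
  have hcomb : (1 - γ) • z + γ • (z + 1) = z + γ := by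
    simp only [smul_eq_mul]; ring
  rw [hcomb] at h
  simp only [Function.comp_apply, smul_eq_mul] at h
  have h2 : Real.Gamma (z + γ) ≤ Real.Gamma z ^ (1 - γ) * Real.Gamma (z + 1) ^ γ := by
    calc Real.Gamma (z + γ) = Real.exp (Real.log (Real.Gamma (z + γ))) := (Real.exp_log hΓzγ).symm
    _ ≤ Real.exp ((1 - γ) * Real.log (Real.Gamma z) + γ * Real.log (Real.Gamma (z + 1))) :=
        Real.exp_le_exp.2 h
    _ = Real.Gamma z ^ (1 - γ) * Real.Gamma (z + 1) ^ γ := by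
        rw [Real.exp_add, Real.rpow_def_of_pos hΓz, Real.rpow_def_of_pos hΓz1]
        ring_nf
  calc Real.Gamma (z + γ) ≤ Real.Gamma z ^ (1 - γ) * Real.Gamma (z + 1) ^ γ := h2
  _ = Real.Gamma z ^ (1 - γ) * (z * Real.Gamma z) ^ γ := by rw [Real.Gamma_add_one hz.ne']
  _ = Real.Gamma z ^ (1 - γ) * (z ^ γ * Real.Gamma z ^ γ) := by
      rw [Real.mul_rpow hz.le hΓz.le]
  _ = (Real.Gamma z ^ (1 - γ) * Real.Gamma z ^ γ) * z ^ γ := by ring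
  _ = Real.Gamma z * z ^ γ := by
      rw [← Real.rpow_add hΓz]; norm_num

/-- For `0 < γ < 1`, `C > 0`, `λ > 0`, `x > 0`, the series
`Σ_{n≥0} ((Cλ)^n/n!) · |sin(πnγ)| Γ(nγ)/π · x^{−nγ}` (n = 0 term equal to 1)
converges; in particular the signed series
`Σ_{n≥0} ((−Cλ)^n/n!) · (sin(πnγ)Γ(nγ)/π) · x^{−nγ}` is absolutely summable. -/
theorem summable_aloha_series (γ C lam x : ℝ)
    (hγ0 : 0 < γ) (hγ1 : γ < 1) (hC : 0 < C) (hlam : 0 < lam) (hx : 0 < x) :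
    Summable (fun n : ℕ =>
      ((C * lam) ^ n / n.factorial) *
        (if n = 0 then 1 else |Real.sin (Real.pi * n * γ)| * Real.Gamma (n * γ) / Real.pi) *
        x ^ (-(n * γ))) ∧
    Summable (fun n : ℕ =>
      |((-(C * lam)) ^ n / n.factorial) *
        (if n = 0 then 1 else Real.sin (Real.pi * n * γ) * Real.Gamma (n * γ) / Real.pi) *
        x ^ (-(n * γ))|) := by
  have hCl : 0 < C * lam := mul_pos hC hlam
  set K : ℝ := C * lam * x ^ (-γ) with hK
  have hKpos : 0 < K := mul_pos hCl (Real.rpow_pos_of_pos hx _)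
  set g : ℕ → ℝ := fun n =>
    ((C * lam) ^ n / n.factorial) *
      (if n = 0 then 1 else Real.Gamma (n * γ) / Real.pi) * x ^ (-(n * γ)) with hg
  have hgpos : ∀ n, 0 < g n := by
    intro n
    have h1 : (0:ℝ) < (C * lam) ^ n / n.factorial := by positivity
    have h3 : (0:ℝ) < x ^ (-((n:ℝ) * γ)) := Real.rpow_pos_of_pos hx _
    rcases eq_or_ne n 0 with rfl | hn
    · have : g 0 = 1 * x ^ (-((0:ℕ) * γ)) := by simp [hg]
      rw [this]; positivity
    · have hn' : (0:ℝ) < (n:ℝ) := by exact_mod_cast Nat.pos_of_ne_zero hn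
      have h2 : (0:ℝ) < Real.Gamma ((n:ℝ) * γ) / Real.pi :=
        div_pos (Real.Gamma_pos_of_pos (by positivity)) Real.pi_pos
      simp only [hg, if_neg hn]
      positivity
  -- Summability of g by ratio test
  have hgsum : Summable g := by
    apply summable_of_ratio_norm_eventually_le (r := 1/2) (by norm_num)
    -- eventually K * (n*γ)^γ ≤ (n+1)/2
    have htend : Tendsto (fun n : ℕ => ((n:ℝ)) ^ (γ - 1)) atTop (nhds 0) := by
      have : Tendsto (fun t : ℝ => t ^ (-(1 - γ))) atTop (nhds 0) :=
        tendsto_rpow_neg_atTop (by linarith)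
      have := this.comp tendsto_natCast_atTop_atTop (α := ℕ)
      convert this using 2 with n
      simp [neg_sub]
    have hev : ∀ᶠ n : ℕ in atTop, ((n:ℝ)) ^ (γ - 1) ≤ 1 / (2 * K) :=
      htend.eventually_le_const (by positivity)
    filter_upwards [hev, eventually_ge_atTop 1] with n hn hn1
    have hnpos : (0:ℝ) < (n:ℝ) := by exact_mod_cast hn1
    have hnγ : (0:ℝ) < (n:ℝ) * γ := by positivity
    -- key scalar bound : K * ((n:ℝ)*γ)^γ ≤ (n+1)/2
    have hscal : K * ((n:ℝ) * γ) ^ γ ≤ ((n:ℝ) + 1) / 2 := by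
      have h1 : ((n:ℝ) * γ) ^ γ ≤ ((n:ℝ)) ^ γ := by
        apply Real.rpow_le_rpow hnγ.le _ hγ0.le
        nlinarith
      have h2 : ((n:ℝ)) ^ γ = (n:ℝ) ^ (γ - 1) * (n:ℝ) := by
        have h2' : ((n:ℝ)) ^ γ = (n:ℝ) ^ (γ - 1) * (n:ℝ) ^ (1:ℝ) := by
          rw [← Real.rpow_add hnpos]; norm_num
        rwa [Real.rpow_one] at h2'
      have h3 : K * ((n:ℝ)) ^ γ ≤ (n:ℝ) / 2 := by
        rw [h2]
        have := mul_le_mul_of_nonneg_right hn hnpos.le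
        calc K * ((n:ℝ) ^ (γ - 1) * (n:ℝ)) ≤ K * (1 / (2 * K) * (n:ℝ)) := by
              apply mul_le_mul_of_nonneg_left this hKpos.le
        _ = (n:ℝ) / 2 := by field_simp
      calc K * ((n:ℝ) * γ) ^ γ ≤ K * ((n:ℝ)) ^ γ :=
            mul_le_mul_of_nonneg_left h1 hKpos.le
      _ ≤ (n:ℝ) / 2 := h3
      _ ≤ ((n:ℝ) + 1) / 2 := by linarith
    -- now compute the ratio bound
    have hne : n ≠ 0 := by omega
    have hΓle : Real.Gamma ((n:ℝ) * γ + γ) ≤ Real.Gamma ((n:ℝ) * γ) * ((n:ℝ) * γ) ^ γ :=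
      gamma_add_le_aux γ hγ0.le hγ1.le hnγ
    have hΓpos : 0 < Real.Gamma ((n:ℝ) * γ) := Real.Gamma_pos_of_pos hnγ
    rw [Real.norm_eq_abs, Real.norm_eq_abs, abs_of_pos (hgpos _), abs_of_pos (hgpos _)]
    have hxsplit : x ^ (-((n:ℝ) * γ + γ)) = x ^ (-((n:ℝ) * γ)) * x ^ (-γ) := by
      have he : -((n:ℝ) * γ + γ) = (-((n:ℝ) * γ)) + (-γ) := by ring
      rw [he, Real.rpow_add hx]
    have hfact : ((n + 1).factorial : ℝ) = ((n:ℝ) + 1) * (n.factorial : ℝ) := by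
      rw [Nat.factorial_succ]; push_cast; ring
    simp only [hg, if_neg hne, if_neg (Nat.succ_ne_zero n)]
    push_cast
    rw [show ((n:ℝ) + 1) * γ = (n:ℝ) * γ + γ by ring]
    rw [hxsplit, hfact]
    have hxneg : (0:ℝ) < x ^ (-γ) := Real.rpow_pos_of_pos hx _
    have hxn : (0:ℝ) < x ^ (-((n:ℝ) * γ)) := Real.rpow_pos_of_pos hx _
    have hfac : (0:ℝ) < (n.factorial : ℝ) := by positivity
    calc (C * lam) ^ (n + 1) / (((n:ℝ) + 1) * (n.factorial : ℝ)) *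
          (Real.Gamma ((n:ℝ) * γ + γ) / Real.pi) * (x ^ (-((n:ℝ) * γ)) * x ^ (-γ))
        ≤ (C * lam) ^ (n + 1) / (((n:ℝ) + 1) * (n.factorial : ℝ)) *
          ((Real.Gamma ((n:ℝ) * γ) * ((n:ℝ) * γ) ^ γ) / Real.pi) *
          (x ^ (-((n:ℝ) * γ)) * x ^ (-γ)) := by
          have hA : (0:ℝ) < (C * lam) ^ (n + 1) / (((n:ℝ) + 1) * (n.factorial : ℝ)) := by
            positivity
          gcongr
      _ = (K * ((n:ℝ) * γ) ^ γ / ((n:ℝ) + 1)) *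
          ((C * lam) ^ n / (n.factorial : ℝ) * (Real.Gamma ((n:ℝ) * γ) / Real.pi) *
            x ^ (-((n:ℝ) * γ))) := by
          rw [hK, pow_succ]
          field_simp
      _ ≤ (1 / 2) *
          ((C * lam) ^ n / (n.factorial : ℝ) * (Real.Gamma ((n:ℝ) * γ) / Real.pi) *
            x ^ (-((n:ℝ) * γ))) := by
          have hB : (0:ℝ) ≤ (C * lam) ^ n / (n.factorial : ℝ) *
              (Real.Gamma ((n:ℝ) * γ) / Real.pi) * x ^ (-((n:ℝ) * γ)) := by positivity
          apply mul_le_mul_of_nonneg_right _ hB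
          rw [div_le_iff₀ (by positivity : (0:ℝ) < (n:ℝ) + 1)]
          linarith [hscal]
  -- first series
  have hfirst : Summable (fun n : ℕ =>
      ((C * lam) ^ n / n.factorial) *
        (if n = 0 then 1 else |Real.sin (Real.pi * n * γ)| * Real.Gamma (n * γ) / Real.pi) *
        x ^ (-(n * γ))) := by
    apply hgsum.of_nonneg_of_le
    · intro n
      rcases eq_or_ne n 0 with rfl | hn
      · positivity
      · have hnγ : (0:ℝ) < (n:ℝ) * γ := by
          have : (0:ℝ) < (n:ℝ) := by exact_mod_cast Nat.pos_of_ne_zero hn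
          positivity
        have := Real.Gamma_pos_of_pos hnγ
        simp only [if_neg hn]
        positivity
    · intro n
      rcases eq_or_ne n 0 with rfl | hn
      · simp [hg]
      · have hnγ : (0:ℝ) < (n:ℝ) * γ := by
          have : (0:ℝ) < (n:ℝ) := by exact_mod_cast Nat.pos_of_ne_zero hn
          positivity
        have hΓpos := Real.Gamma_pos_of_pos hnγ
        simp only [hg, if_neg hn]
        have hsin : |Real.sin (Real.pi * n * γ)| ≤ 1 := abs_sin_le_one _
        gcongr
        calc |Real.sin (Real.pi * n * γ)| * Real.Gamma ((n:ℝ) * γ)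
            ≤ 1 * Real.Gamma ((n:ℝ) * γ) := by gcongr
          _ = Real.Gamma ((n:ℝ) * γ) := one_mul _
  refine ⟨hfirst, ?_⟩
  have heq : (fun n : ℕ =>
      |((-(C * lam)) ^ n / n.factorial) *
        (if n = 0 then 1 else Real.sin (Real.pi * n * γ) * Real.Gamma (n * γ) / Real.pi) *
        x ^ (-(n * γ))|) = (fun n : ℕ =>
      ((C * lam) ^ n / n.factorial) *
        (if n = 0 then 1 else |Real.sin (Real.pi * n * γ)| * Real.Gamma (n * γ) / Real.pi) *
        x ^ (-(n * γ))) := by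
    funext n
    rcases eq_or_ne n 0 with rfl | hn
    · simp
    · have hnγ : (0:ℝ) < (n:ℝ) * γ := by
        have : (0:ℝ) < (n:ℝ) := by exact_mod_cast Nat.pos_of_ne_zero hn
        positivity
      have hΓpos := Real.Gamma_pos_of_pos hnγ
      have hxn : (0:ℝ) < x ^ (-((n:ℝ) * γ)) := Real.rpow_pos_of_pos hx _
      simp only [if_neg hn]
      rw [abs_mul, abs_mul, abs_div, abs_div, abs_mul, abs_pow, abs_neg,
        abs_of_pos hCl, abs_of_pos hΓpos, abs_of_pos Real.pi_pos, abs_of_pos hxn]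
      norm_num
  rw [heq]
  exact hfirst
end

section
/- Let S be a countable set of points in the Euclidean plane ℝ² with at least two elements, let z ∈ ℝ², and let z_i ∈ S with d_i := ‖z − z_i‖ > 0. Assume (a) the strict Voronoi condition d_i < inf_{z_j∈S, z_j≠z_i} ‖z − z_j‖, (b) inf_{z_j≠z_i} ‖z − z_j‖ > 0, and (c) there exists α₀ > 0 with Σ_{z_j≠z_i} ‖z − z_j‖^{−α₀} < ∞. Then the SIR of transmitter i at z, S_i^{(α)}(z) = d_i^{−α} / Σ_{z_j∈S, z_j≠z_i} ‖z − z_j‖^{−α}, tends to +∞ as α → ∞. -/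
open Real Filter

/-- If `z` is strictly closer to `z_i` than to every other transmitter of `S`
(strict Voronoi condition), then the SIR of transmitter `i` at `z` tends to `+∞`
as the attenuation coefficient `α → ∞`. -/
theorem sir_tendsto_atTop_of_strict_voronoi
    (S : Set (EuclideanSpace ℝ (Fin 2))) (hS : S.Countable) (hS2 : S.Nontrivial)
    (z : EuclideanSpace ℝ (Fin 2)) (zi : EuclideanSpace ℝ (Fin 2)) (hzi : zi ∈ S)
    (hdi : 0 < ‖z - zi‖)
    (ha : ‖z - zi‖ < ⨅ p : ↥(S \ {zi}), ‖z - (p : EuclideanSpace ℝ (Fin 2))‖)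
    (hb : 0 < ⨅ p : ↥(S \ {zi}), ‖z - (p : EuclideanSpace ℝ (Fin 2))‖)
    (hc : ∃ α₀ : ℝ, 0 < α₀ ∧
      Summable fun p : ↥(S \ {zi}) => ‖z - (p : EuclideanSpace ℝ (Fin 2))‖ ^ (-α₀)) :
    Tendsto
      (fun α : ℝ => ‖z - zi‖ ^ (-α) /
        ∑' p : ↥(S \ {zi}), ‖z - (p : EuclideanSpace ℝ (Fin 2))‖ ^ (-α))
      atTop atTop := by
  obtain ⟨α₀, hα₀, hsum⟩ := hc
  set d := ‖z - zi‖ with hd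
  set m := ⨅ p : ↥(S \ {zi}), ‖z - (p : EuclideanSpace ℝ (Fin 2))‖ with hmdef
  have hne : Nonempty ↥(S \ {zi}) := by
    obtain ⟨x, hx, y, hy, hxy⟩ := hS2
    rcases eq_or_ne x zi with rfl | h
    · exact ⟨⟨y, ⟨hy, hxy.symm⟩⟩⟩
    · exact ⟨⟨x, ⟨hx, h⟩⟩⟩
  have hbdd : BddBelow (Set.range fun p : ↥(S \ {zi}) =>
      ‖z - (p : EuclideanSpace ℝ (Fin 2))‖) := by
    refine ⟨0, ?_⟩
    rintro _ ⟨p, rfl⟩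
    positivity
  have hmle : ∀ p : ↥(S \ {zi}), m ≤ ‖z - (p : EuclideanSpace ℝ (Fin 2))‖ :=
    fun p => ciInf_le hbdd p
  have hppos : ∀ p : ↥(S \ {zi}), 0 < ‖z - (p : EuclideanSpace ℝ (Fin 2))‖ :=
    fun p => lt_of_lt_of_le hb (hmle p)
  set C := ∑' p : ↥(S \ {zi}), ‖z - (p : EuclideanSpace ℝ (Fin 2))‖ ^ (-α₀) with hC
  have hCpos : 0 < C := by
    refine Summable.tsum_pos hsum (fun p => Real.rpow_nonneg (norm_nonneg _) _)
      (Classical.arbitrary _) ?_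
    exact Real.rpow_pos_of_pos (hppos _) _
  have hmd : 1 < m / d := (one_lt_div hdi).2 ha
  have key : ∀ α : ℝ, α₀ ≤ α →
      (m / d) ^ α * (m ^ (-α₀) / C) ≤
        d ^ (-α) / ∑' p : ↥(S \ {zi}), ‖z - (p : EuclideanSpace ℝ (Fin 2))‖ ^ (-α) := by
    intro α hα
    have hterm : ∀ p : ↥(S \ {zi}),
        ‖z - (p : EuclideanSpace ℝ (Fin 2))‖ ^ (-α) ≤
          m ^ (α₀ - α) * ‖z - (p : EuclideanSpace ℝ (Fin 2))‖ ^ (-α₀) := by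
      intro p
      have h1 : ‖z - (p : EuclideanSpace ℝ (Fin 2))‖ ^ (-α) =
          ‖z - (p : EuclideanSpace ℝ (Fin 2))‖ ^ (α₀ - α) *
            ‖z - (p : EuclideanSpace ℝ (Fin 2))‖ ^ (-α₀) := by
        rw [← Real.rpow_add (hppos p)]; ring_nf
      rw [h1]
      have h2 : ‖z - (p : EuclideanSpace ℝ (Fin 2))‖ ^ (α₀ - α) ≤ m ^ (α₀ - α) :=
        Real.rpow_le_rpow_of_nonpos hb (hmle p) (by linarith)
      exact mul_le_mul_of_nonneg_right h2 (Real.rpow_nonneg (norm_nonneg _) _)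
    have hsumα : Summable fun p : ↥(S \ {zi}) =>
        ‖z - (p : EuclideanSpace ℝ (Fin 2))‖ ^ (-α) := by
      refine Summable.of_nonneg_of_le (fun p => Real.rpow_nonneg (norm_nonneg _) _)
        hterm (hsum.mul_left _)
    have hTpos : 0 < ∑' p : ↥(S \ {zi}), ‖z - (p : EuclideanSpace ℝ (Fin 2))‖ ^ (-α) :=
      Summable.tsum_pos hsumα (fun p => Real.rpow_nonneg (norm_nonneg _) _)
        (Classical.arbitrary _) (Real.rpow_pos_of_pos (hppos _) _)
    have hTle : ∑' p : ↥(S \ {zi}), ‖z - (p : EuclideanSpace ℝ (Fin 2))‖ ^ (-α) ≤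
        m ^ (α₀ - α) * C := by
      rw [hC, ← tsum_mul_left]
      exact Summable.tsum_le_tsum hterm hsumα (hsum.mul_left _)
    have hmul : 0 < m ^ (α₀ - α) * C :=
      mul_pos (Real.rpow_pos_of_pos hb _) hCpos
    have hdiv : d ^ (-α) / (m ^ (α₀ - α) * C) ≤
        d ^ (-α) / ∑' p : ↥(S \ {zi}), ‖z - (p : EuclideanSpace ℝ (Fin 2))‖ ^ (-α) :=
      div_le_div_of_nonneg_left (Real.rpow_nonneg hdi.le _) hTpos hTle
    refine le_trans (le_of_eq ?_) hdiv
    rw [Real.div_rpow hb.le hdi.le, Real.rpow_sub hb, Real.rpow_neg hdi.le,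
      Real.rpow_neg hb.le α₀]
    have hdα : (0:ℝ) < d ^ α := Real.rpow_pos_of_pos hdi α
    have hmα : (0:ℝ) < m ^ α := Real.rpow_pos_of_pos hb α
    have hmα₀ : (0:ℝ) < m ^ α₀ := Real.rpow_pos_of_pos hb α₀
    field_simp
  have hconst : 0 < m ^ (-α₀) / C :=
    div_pos (Real.rpow_pos_of_pos hb _) hCpos
  have hg1 : Tendsto (fun α : ℝ => (m / d) ^ α) atTop atTop := by
    have h := tendsto_exp_atTop.comp
      ((tendsto_const_mul_atTop_of_pos (Real.log_pos hmd)).mpr tendsto_id)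
    refine h.congr fun α => ?_
    simp [Real.rpow_def_of_pos (by positivity : (0:ℝ) < m / d), Function.comp]
  have hg : Tendsto (fun α : ℝ => (m / d) ^ α * (m ^ (-α₀) / C)) atTop atTop :=
    hg1.atTop_mul_const hconst
  refine tendsto_atTop_mono' atTop ?_ hg
  filter_upwards [eventually_ge_atTop α₀] with α hα using key α hα
end

section
/- Let S be a countable set of points in the Euclidean plane ℝ², let z ∈ ℝ², and let z_i ∈ S with d_i := ‖z − z_i‖ > 0. Assume (a) there exists z_j ∈ S with z_j ≠ z_i and 0 < ‖z − z_j‖ < d_i, (b) inf_{z_k≠z_i} ‖z − z_k‖ > 0, and (c) there exists α₀ > 0 with Σ_{z_k≠z_i} ‖z − z_k‖^{−α₀} < ∞. Then the SIR of transmitter i at z, S_i^{(α)}(z) = d_i^{−α} / Σ_{z_k∈S, z_k≠z_i} ‖z − z_k‖^{−α}, tends to 0 as α → ∞. -/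
open Real Filter

/-- If some other transmitter of `S` is strictly closer to `z` than `z_i` is, then the
SIR of transmitter `i` at `z` tends to `0` as the attenuation coefficient `α → ∞`. -/
theorem sir_tendsto_zero_of_closer_interferer
    (S : Set (EuclideanSpace ℝ (Fin 2))) (hS : S.Countable)
    (z : EuclideanSpace ℝ (Fin 2)) (zi : EuclideanSpace ℝ (Fin 2)) (hzi : zi ∈ S)
    (hdi : 0 < ‖z - zi‖)
    (ha : ∃ zj ∈ S, zj ≠ zi ∧ 0 < ‖z - zj‖ ∧ ‖z - zj‖ < ‖z - zi‖)
    (hb : 0 < ⨅ p : ↥(S \ {zi}), ‖z - (p : EuclideanSpace ℝ (Fin 2))‖)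
    (hc : ∃ α₀ : ℝ, 0 < α₀ ∧
      Summable fun p : ↥(S \ {zi}) => ‖z - (p : EuclideanSpace ℝ (Fin 2))‖ ^ (-α₀)) :
    Tendsto
      (fun α : ℝ => ‖z - zi‖ ^ (-α) /
        ∑' p : ↥(S \ {zi}), ‖z - (p : EuclideanSpace ℝ (Fin 2))‖ ^ (-α))
      atTop (nhds 0) := by
  obtain ⟨zj, hzjS, hzjne, hdj, hjlt⟩ := ha
  obtain ⟨α₀, hα₀, hsum₀⟩ := hc
  set m : ℝ := ⨅ p : ↥(S \ {zi}), ‖z - (p : EuclideanSpace ℝ (Fin 2))‖ with hm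
  have hmem : zj ∈ S \ {zi} := ⟨hzjS, hzjne⟩
  let j : ↥(S \ {zi}) := ⟨zj, hmem⟩
  have hbdd : BddBelow (Set.range fun p : ↥(S \ {zi}) =>
      ‖z - (p : EuclideanSpace ℝ (Fin 2))‖) :=
    ⟨0, by rintro _ ⟨p, rfl⟩; exact norm_nonneg _⟩
  have hmle : ∀ p : ↥(S \ {zi}), m ≤ ‖z - (p : EuclideanSpace ℝ (Fin 2))‖ :=
    fun p => ciInf_le hbdd p
  have hppos : ∀ p : ↥(S \ {zi}), (0:ℝ) < ‖z - (p : EuclideanSpace ℝ (Fin 2))‖ :=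
    fun p => lt_of_lt_of_le hb (hmle p)
  -- summability for α ≥ α₀
  have hsum : ∀ α : ℝ, α₀ ≤ α →
      Summable fun p : ↥(S \ {zi}) => ‖z - (p : EuclideanSpace ℝ (Fin 2))‖ ^ (-α) := by
    intro α hα
    refine Summable.of_nonneg_of_le (fun p => (Real.rpow_pos_of_pos (hppos p) _).le)
      (fun p => ?_) (hsum₀.mul_right (m ^ (α₀ - α)))
    have h1 : ‖z - (p : EuclideanSpace ℝ (Fin 2))‖ ^ (-α) =
        ‖z - (p : EuclideanSpace ℝ (Fin 2))‖ ^ (-α₀) *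
          ‖z - (p : EuclideanSpace ℝ (Fin 2))‖ ^ (α₀ - α) := by
      rw [← Real.rpow_add (hppos p)]; ring_nf
    rw [h1]
    refine mul_le_mul_of_nonneg_left ?_ (Real.rpow_pos_of_pos (hppos p) _).le
    exact Real.rpow_le_rpow_of_nonpos hb (hmle p) (by linarith)
  have htsum_lb : ∀ α : ℝ, α₀ ≤ α →
      ‖z - zj‖ ^ (-α) ≤
        ∑' p : ↥(S \ {zi}), ‖z - (p : EuclideanSpace ℝ (Fin 2))‖ ^ (-α) := by
    intro α hα
    exact Summable.le_tsum (hsum α hα) j (fun p _ => (Real.rpow_pos_of_pos (hppos p) _).le)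
  have hub : Tendsto (fun α : ℝ => (‖z - zj‖ / ‖z - zi‖) ^ α) atTop (nhds 0) :=
    tendsto_rpow_atTop_of_base_lt_one _
      (by have : (0:ℝ) ≤ ‖z - zj‖ / ‖z - zi‖ := by positivity
          linarith)
      ((div_lt_one hdi).2 hjlt)
  refine tendsto_of_tendsto_of_tendsto_of_le_of_le' tendsto_const_nhds hub ?_ ?_
  · filter_upwards [eventually_ge_atTop α₀] with α hα
    have hden : (0:ℝ) < ∑' p : ↥(S \ {zi}), ‖z - (p : EuclideanSpace ℝ (Fin 2))‖ ^ (-α) :=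
      lt_of_lt_of_le (Real.rpow_pos_of_pos hdj _) (htsum_lb α hα)
    exact div_nonneg (Real.rpow_nonneg hdi.le _) hden.le
  · filter_upwards [eventually_ge_atTop α₀] with α hα
    have hden : (0:ℝ) < ∑' p : ↥(S \ {zi}), ‖z - (p : EuclideanSpace ℝ (Fin 2))‖ ^ (-α) :=
      lt_of_lt_of_le (Real.rpow_pos_of_pos hdj _) (htsum_lb α hα)
    have h1 : ‖z - zi‖ ^ (-α) / (∑' p : ↥(S \ {zi}),
        ‖z - (p : EuclideanSpace ℝ (Fin 2))‖ ^ (-α)) ≤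
        ‖z - zi‖ ^ (-α) / ‖z - zj‖ ^ (-α) := by
      exact div_le_div_of_nonneg_left (Real.rpow_nonneg hdi.le _)
        (Real.rpow_pos_of_pos hdj _) (htsum_lb α hα)
    refine h1.trans_eq ?_
    rw [Real.rpow_neg hdi.le, Real.rpow_neg hdj.le, inv_div_inv,
      ← Real.div_rpow (norm_nonneg _) (norm_nonneg _)]
end

section
/- Let α > 2 and let S be a countable nonempty set of points in the Euclidean plane ℝ² with 0 ∉ S, δ := inf_{p∈S} ‖p‖ > 0, and I(0) := Σ_{p∈S} ‖p‖^{−α} finite and positive. For z ∉ S set I(z) := Σ_{p∈S} ‖z − p‖^{−α}, and for β > 0 define the maximum transmission range r(β) := sup{ ‖z‖ : z ∈ ℝ², z ∉ S, ‖z‖^{−α} ≥ β I(z) }. Assume moreover that liminf_{‖z‖→∞, z∉S} ‖z‖^{α} I(z) > 0. Then β^{1/α} · r(β) → I(0)^{−1/α} as β → ∞. -/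
open Real Filter


lemma rpow_neg_anti {a b e : ℝ} (ha : 0 < a) (hab : a ≤ b) (he : 0 ≤ e) :
    b ^ (-e) ≤ a ^ (-e) := by
  rw [Real.rpow_neg (ha.trans_le hab).le, Real.rpow_neg ha.le]
  exact inv_anti₀ (Real.rpow_pos_of_pos ha e) (Real.rpow_le_rpow ha.le hab he)

lemma rpow_neg_inv_rpow {x c : ℝ} (hx : 0 ≤ x) (hc : 0 < c) :
    (x ^ (-c)) ^ (-(1/c)) = x := by
  rw [← Real.rpow_mul hx, neg_mul_neg, mul_one_div, div_self hc.ne', Real.rpow_one]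

lemma rpow_neg_inv_rpow' {x c : ℝ} (hx : 0 ≤ x) (hc : 0 < c) :
    (x ^ (-(1/c))) ^ (-c) = x := by
  rw [← Real.rpow_mul hx, neg_mul_neg, one_div, inv_mul_cancel₀ hc.ne', Real.rpow_one]

lemma le_rpow_neg_inv {x a c : ℝ} (hx : 0 < x) (ha : 0 < a) (hc : 0 < c)
    (h : a ≤ x ^ (-c)) : x ≤ a ^ (-(1/c)) := by
  have h2 := rpow_neg_anti ha h (by positivity : (0:ℝ) ≤ 1/c)
  rwa [rpow_neg_inv_rpow hx.le hc] at h2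

lemma div_two_rpow {p : ℝ} (hp : 0 ≤ p) (α : ℝ) :
    (p / 2) ^ (-α) = p ^ (-α) * 2 ^ α := by
  rw [Real.div_rpow hp (by norm_num), Real.rpow_neg (by norm_num : (0:ℝ) ≤ 2),
    div_inv_eq_mul]


set_option maxHeartbeats 1000000 in
/-- As the SIR threshold `β → ∞`, the normalized maximum transmission range
`β^{1/α} r(β)` of a transmitter at the origin, interfered by the transmitters of `S`,
converges to `I(0)^{−1/α}` where `I(0) = Σ_{p∈S} ‖p‖^{−α}`. -/
theorem normalized_range_tendsto_of_beta_atTop (α : ℝ) (hα : 2 < α)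
    (S : Set (EuclideanSpace ℝ (Fin 2))) (hS : S.Countable) (hne : S.Nonempty)
    (h0 : (0 : EuclideanSpace ℝ (Fin 2)) ∉ S)
    (hδ : 0 < ⨅ p : S, ‖(p : EuclideanSpace ℝ (Fin 2))‖)
    (hI0sum : Summable fun p : S => ‖(p : EuclideanSpace ℝ (Fin 2))‖ ^ (-α))
    (hI0pos : 0 < ∑' p : S, ‖(p : EuclideanSpace ℝ (Fin 2))‖ ^ (-α))
    (hliminf : ∃ c : ℝ, 0 < c ∧ ∃ R : ℝ, ∀ z : EuclideanSpace ℝ (Fin 2), z ∉ S → R ≤ ‖z‖ →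
      c ≤ ‖z‖ ^ α * ∑' p : S, ‖z - (p : EuclideanSpace ℝ (Fin 2))‖ ^ (-α)) :
    Tendsto
      (fun β : ℝ => β ^ (1 / α) *
        sSup {x : ℝ | ∃ z : EuclideanSpace ℝ (Fin 2), z ∉ S ∧ ‖z‖ = x ∧
          β * ∑' p : S, ‖z - (p : EuclideanSpace ℝ (Fin 2))‖ ^ (-α) ≤ ‖z‖ ^ (-α)})
      atTop
      (nhds ((∑' p : S, ‖(p : EuclideanSpace ℝ (Fin 2))‖ ^ (-α)) ^ (-(1 / α)))) := by
  classical
  haveI : Nonempty S := hne.to_subtype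
  obtain ⟨c, hc, R0, hR0⟩ := hliminf
  obtain ⟨p₀, hp₀⟩ := hne
  set δ := ⨅ p : S, ‖(p : EuclideanSpace ℝ (Fin 2))‖ with hδdef
  have hbdd : BddBelow (Set.range fun p : S => ‖(p : EuclideanSpace ℝ (Fin 2))‖) :=
    ⟨0, by rintro _ ⟨p, rfl⟩; exact norm_nonneg _⟩
  have hδle : ∀ p : S, δ ≤ ‖(p : EuclideanSpace ℝ (Fin 2))‖ := fun p => ciInf_le hbdd p
  have hαpos : (0:ℝ) < α := by linarith
  set I0 := ∑' p : S, ‖(p : EuclideanSpace ℝ (Fin 2))‖ ^ (-α) with hI0def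
  -- a pointwise domination bound
  have hterm_bound : ∀ (z : EuclideanSpace ℝ (Fin 2)) (p : S),
      2 * ‖z‖ ≤ ‖(p : EuclideanSpace ℝ (Fin 2))‖ →
      ‖z - (p : EuclideanSpace ℝ (Fin 2))‖ ^ (-α)
        ≤ ‖(p : EuclideanSpace ℝ (Fin 2))‖ ^ (-α) * 2 ^ α := by
    intro z p hp
    have hppos : 0 < ‖(p : EuclideanSpace ℝ (Fin 2))‖ := hδ.trans_le (hδle p)
    have h1 : ‖(p : EuclideanSpace ℝ (Fin 2))‖ / 2 ≤ ‖z - (p : EuclideanSpace ℝ (Fin 2))‖ := by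
      have h2 : ‖(p : EuclideanSpace ℝ (Fin 2))‖ - ‖z‖
          ≤ ‖(p : EuclideanSpace ℝ (Fin 2)) - z‖ := norm_sub_norm_le _ _
      rw [norm_sub_rev] at h2
      linarith
    calc ‖z - (p : EuclideanSpace ℝ (Fin 2))‖ ^ (-α)
        ≤ (‖(p : EuclideanSpace ℝ (Fin 2))‖ / 2) ^ (-α) :=
          rpow_neg_anti (by positivity) h1 hαpos.le
      _ = ‖(p : EuclideanSpace ℝ (Fin 2))‖ ^ (-α) * 2 ^ α := div_two_rpow (norm_nonneg _) α
  -- summability everywhere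
  have hsum : ∀ z : EuclideanSpace ℝ (Fin 2),
      Summable (fun p : S => ‖z - (p : EuclideanSpace ℝ (Fin 2))‖ ^ (-α)) := by
    intro z
    have hBpos : 0 < max (2*‖z‖) δ := lt_max_of_lt_right hδ
    have hfin : {p : S | ‖(p : EuclideanSpace ℝ (Fin 2))‖ ≤ 2*‖z‖}.Finite := by
      have hev : ∀ᶠ p : S in cofinite,
          ‖(p : EuclideanSpace ℝ (Fin 2))‖ ^ (-α) < (max (2*‖z‖) δ) ^ (-α) :=
        hI0sum.tendsto_cofinite_zero.eventually
          (gt_mem_nhds (Real.rpow_pos_of_pos hBpos _))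
      refine (Filter.eventually_cofinite.mp hev).subset ?_
      intro p hp
      exact not_lt.mpr (rpow_neg_anti (hδ.trans_le (hδle p))
        (le_max_of_le_left hp) hαpos.le)
    rw [← Set.Finite.summable_compl_iff hfin]
    refine Summable.of_nonneg_of_le (fun q => Real.rpow_nonneg (norm_nonneg _) _)
      (fun q => hterm_bound z q.1 (by
        have h := q.2
        simp only [Set.mem_compl_iff, Set.mem_setOf_eq, not_le] at h
        exact h.le)) ?_
    exact (hI0sum.mul_right _).subtype _
  -- continuity of the interference at 0
  have hcontOn : ContinuousOn
      (fun z : EuclideanSpace ℝ (Fin 2) =>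
        ∑' p : S, ‖z - (p : EuclideanSpace ℝ (Fin 2))‖ ^ (-α))
      (Metric.closedBall 0 (δ/2)) := by
    refine continuousOn_tsum (u := fun p : S =>
      ‖(p : EuclideanSpace ℝ (Fin 2))‖ ^ (-α) * 2 ^ α) ?_ (hI0sum.mul_right _) ?_
    · intro p
      refine ContinuousOn.rpow_const
        ((continuous_id.sub continuous_const).norm.continuousOn) ?_
      intro z hz
      left
      have hzn : ‖z‖ ≤ δ/2 := by simpa using mem_closedBall_zero_iff.mp hz
      have h2 : ‖(p : EuclideanSpace ℝ (Fin 2))‖ - ‖z‖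
          ≤ ‖(p : EuclideanSpace ℝ (Fin 2)) - z‖ := norm_sub_norm_le _ _
      rw [norm_sub_rev] at h2
      have := hδle p
      have : 0 < ‖z - (p : EuclideanSpace ℝ (Fin 2))‖ := by linarith
      exact this.ne'
    · intro p z hz
      rw [Real.norm_of_nonneg (Real.rpow_nonneg (norm_nonneg _) _)]
      refine hterm_bound z p ?_
      have hzn : ‖z‖ ≤ δ/2 := by simpa using mem_closedBall_zero_iff.mp hz
      have := hδle p
      linarith
  have hcont : ContinuousAt
      (fun z : EuclideanSpace ℝ (Fin 2) =>
        ∑' p : S, ‖z - (p : EuclideanSpace ℝ (Fin 2))‖ ^ (-α)) 0 :=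
    hcontOn.continuousAt (Metric.closedBall_mem_nhds 0 (by linarith))
  have hF0 : (∑' p : S, ‖(0:EuclideanSpace ℝ (Fin 2)) - (p : EuclideanSpace ℝ (Fin 2))‖ ^ (-α))
      = I0 := by
    rw [hI0def]
    congr 1
    funext p
    rw [zero_sub, norm_neg]
  -- main argument
  rw [Metric.tendsto_atTop]
  intro ε hε
  -- choose η via continuity of t ↦ (t*I0)^(-(1/α)) at 1
  have hgc : ContinuousAt (fun t : ℝ => (t * I0) ^ (-(1/α))) 1 := by
    refine ContinuousAt.rpow_const ((continuous_id.mul continuous_const).continuousAt) ?_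
    left
    simpa using hI0pos.ne'
  obtain ⟨ρ, hρpos, hρ⟩ := Metric.continuousAt_iff.mp hgc ε hε
  set η := min (ρ/2) (1/2) with hηdef
  have hηpos : 0 < η := lt_min (by linarith) (by norm_num)
  have hηlt1 : η < 1 := lt_of_le_of_lt (min_le_right _ _) (by norm_num)
  have hd : ∀ s : ℝ, dist s 1 < ρ →
      dist ((s * I0) ^ (-(1/α))) (I0 ^ (-(1/α))) < ε := by
    intro s hs
    have := hρ hs
    simpa [one_mul] using this
  have hd1 : dist (((1-η) * I0) ^ (-(1/α))) (I0 ^ (-(1/α))) < ε := by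
    refine hd _ ?_
    rw [Real.dist_eq]
    have : |1 - η - 1| = η := by rw [show (1:ℝ) - η - 1 = -η by ring, abs_neg, abs_of_pos hηpos]
    rw [this]
    exact lt_of_le_of_lt (min_le_left _ _) (by linarith)
  have hd2 : dist (((1+η) * I0) ^ (-(1/α))) (I0 ^ (-(1/α))) < ε := by
    refine hd _ ?_
    rw [Real.dist_eq]
    have : |1 + η - 1| = η := by rw [show (1:ℝ) + η - 1 = η by ring, abs_of_pos hηpos]
    rw [this]
    exact lt_of_le_of_lt (min_le_left _ _) (by linarith)
  -- choose ρ₂ via continuity of interference at 0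
  obtain ⟨ρ₁, hρ₁pos, hρ₁⟩ := Metric.continuousAt_iff.mp hcont (η * I0) (by positivity)
  set ρ₂ := min (ρ₁/2) (δ/2) with hρ₂def
  have hρ₂pos : 0 < ρ₂ := lt_min (by linarith) (by linarith)
  have hFnear : ∀ z : EuclideanSpace ℝ (Fin 2), ‖z‖ ≤ ρ₂ →
      (1-η) * I0 ≤ (∑' p : S, ‖z - (p : EuclideanSpace ℝ (Fin 2))‖ ^ (-α)) ∧
      (∑' p : S, ‖z - (p : EuclideanSpace ℝ (Fin 2))‖ ^ (-α)) ≤ (1+η) * I0 := by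
    intro z hz
    have hdz : dist z 0 < ρ₁ := by
      rw [dist_zero_right]
      exact lt_of_le_of_lt hz (lt_of_le_of_lt (min_le_left _ _) (by linarith))
    have := hρ₁ hdz
    rw [hF0, Real.dist_eq, abs_lt] at this
    constructor <;> nlinarith [this.1, this.2]
  -- constants for the upper bound
  set Rm := max R0 ρ₂ with hRmdef
  have hRmpos : 0 < Rm := lt_of_lt_of_le hρ₂pos (le_max_right _ _)
  set m := (Rm + ‖p₀‖) ^ (-α) with hmdef
  have hmpos : 0 < m := Real.rpow_pos_of_pos (by positivity) _
  have hmid : ∀ z : EuclideanSpace ℝ (Fin 2), z ∉ S → ‖z‖ ≤ Rm →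
      m ≤ ∑' p : S, ‖z - (p : EuclideanSpace ℝ (Fin 2))‖ ^ (-α) := by
    intro z hzS hzRm
    have hzp0 : 0 < ‖z - p₀‖ := by
      rw [norm_pos_iff, sub_ne_zero]
      rintro rfl; exact hzS hp₀
    have hzp : ‖z - p₀‖ ≤ Rm + ‖p₀‖ := (norm_sub_le _ _).trans (by linarith)
    calc m ≤ ‖z - p₀‖ ^ (-α) := rpow_neg_anti hzp0 hzp hαpos.le
      _ ≤ _ := Summable.le_tsum (hsum z) ⟨p₀, hp₀⟩
        (fun j _ => Real.rpow_nonneg (norm_nonneg _) _)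
  -- choose N
  refine ⟨max 1 (max (1/c + 1) (max (ρ₂^(-α)/m + 1) (ρ₂^(-α) / ((1+η)*I0) + 1))), ?_⟩
  intro β hβ
  have hβ1 : (1:ℝ) ≤ β := le_trans (le_max_left _ _) hβ
  have hβpos : 0 < β := by linarith
  have hβc : 1/β < c := by
    have h1 : 1/c + 1 ≤ β := le_trans (le_trans (le_max_left _ _) (le_max_right _ _)) hβ
    rw [div_lt_iff₀ hβpos]
    have h3 := mul_le_mul_of_nonneg_left h1 hc.le
    rw [mul_add, mul_one, mul_one_div_cancel hc.ne'] at h3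
    linarith
  have hβm : ρ₂^(-α) < β * m := by
    have h1 : ρ₂^(-α)/m + 1 ≤ β :=
      le_trans (le_trans (le_trans (le_max_left _ _) (le_max_right _ _)) (le_max_right _ _)) hβ
    have h2 : ρ₂^(-α)/m < β := by nlinarith [Real.rpow_pos_of_pos hρ₂pos (-α)]
    calc ρ₂^(-α) = ρ₂^(-α)/m * m := by field_simp
      _ < β * m := by exact mul_lt_mul_of_pos_right h2 hmpos
  have hTpos : 0 < (1+η) * I0 := by positivity
  have hTpos' : 0 < (1-η) * I0 := mul_pos (by linarith) hI0pos
  have hβρ : ρ₂^(-α) ≤ β * ((1+η)*I0) := by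
    have h1 : ρ₂^(-α) / ((1+η)*I0) + 1 ≤ β :=
      le_trans (le_trans (le_trans (le_max_right _ _) (le_max_right _ _)) (le_max_right _ _)) hβ
    have h2 : ρ₂^(-α) / ((1+η)*I0) ≤ β := by linarith
    calc ρ₂^(-α) = ρ₂^(-α) / ((1+η)*I0) * ((1+η)*I0) := by field_simp
      _ ≤ β * ((1+η)*I0) := mul_le_mul_of_nonneg_right h2 hTpos.le
  set A := {x : ℝ | ∃ z : EuclideanSpace ℝ (Fin 2), z ∉ S ∧ ‖z‖ = x ∧
      β * ∑' p : S, ‖z - (p : EuclideanSpace ℝ (Fin 2))‖ ^ (-α) ≤ ‖z‖ ^ (-α)} with hAdef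
  set rβ' := (β * ((1+η)*I0)) ^ (-(1/α)) with hrβ'def
  set ub := (β * ((1-η)*I0)) ^ (-(1/α)) with hubdef
  have hβTpos : 0 < β * ((1+η)*I0) := mul_pos hβpos hTpos
  have hβT'pos : 0 < β * ((1-η)*I0) := mul_pos hβpos hTpos'
  have hrβ'pos : 0 < rβ' := Real.rpow_pos_of_pos hβTpos _
  have hrβ'ρ : rβ' ≤ ρ₂ := by
    have h2 := rpow_neg_anti (Real.rpow_pos_of_pos hρ₂pos (-α)) hβρ
      (by positivity : (0:ℝ) ≤ 1/α)
    rwa [rpow_neg_inv_rpow hρ₂pos.le hαpos] at h2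
  -- membership: rβ' ∈ A
  have hmem : rβ' ∈ A := by
    refine ⟨EuclideanSpace.single 0 rβ', ?_, ?_, ?_⟩
    · intro hzS
      have h1 : δ ≤ ‖EuclideanSpace.single (0 : Fin 2) rβ'‖ :=
        hδle ⟨_, hzS⟩
      rw [EuclideanSpace.norm_single, Real.norm_of_nonneg hrβ'pos.le] at h1
      have h2 : ρ₂ ≤ δ/2 := min_le_right _ _
      linarith [hrβ'ρ]
    · rw [EuclideanSpace.norm_single, Real.norm_of_nonneg hrβ'pos.le]
    · rw [EuclideanSpace.norm_single, Real.norm_of_nonneg hrβ'pos.le]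
      rw [hrβ'def, rpow_neg_inv_rpow' hβTpos.le hαpos]
      have hF := (hFnear (EuclideanSpace.single 0 rβ') (by
        rw [EuclideanSpace.norm_single, Real.norm_of_nonneg hrβ'pos.le]; exact hrβ'ρ)).2
      calc β * ∑' p : S, ‖EuclideanSpace.single (0:Fin 2) rβ' -
            (p : EuclideanSpace ℝ (Fin 2))‖ ^ (-α)
          ≤ β * ((1+η)*I0) := mul_le_mul_of_nonneg_left hF hβpos.le
        _ = β * ((1+η)*I0) := rfl
  -- upper bound on elements of A
  have hub : ∀ x ∈ A, x ≤ ub := by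
    rintro x ⟨z, hzS, rfl, hcond⟩
    rcases le_or_gt ‖z‖ ρ₂ with h1 | h1
    · have hF := (hFnear z h1).1
      have hcond2 : β * ((1-η)*I0) ≤ ‖z‖^(-α) :=
        le_trans (mul_le_mul_of_nonneg_left hF hβpos.le) hcond
      have hzpos : 0 < ‖z‖ := by
        rcases (norm_nonneg z).lt_or_eq with h | h
        · exact h
        · exfalso
          rw [← h, Real.zero_rpow (neg_ne_zero.mpr hαpos.ne')] at hcond2
          nlinarith
      exact le_rpow_neg_inv hzpos hβT'pos hαpos hcond2
    · exfalso
      rcases le_or_gt ‖z‖ Rm with h2 | h2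
      · have hm := hmid z hzS h2
        have h3 : β * m ≤ ‖z‖^(-α) :=
          le_trans (mul_le_mul_of_nonneg_left hm hβpos.le) hcond
        have h4 : ‖z‖^(-α) ≤ ρ₂^(-α) := rpow_neg_anti hρ₂pos h1.le hαpos.le
        linarith
      · have hR := hR0 z hzS (le_trans (le_max_left _ _) h2.le)
        have hzpos : 0 < ‖z‖ := lt_trans hRmpos h2
        have h5 : ‖z‖^α * (∑' p : S, ‖z - (p : EuclideanSpace ℝ (Fin 2))‖ ^ (-α)) ≤ 1/β := by
          have h6 : β * (‖z‖^α * ∑' p : S, ‖z - (p : EuclideanSpace ℝ (Fin 2))‖ ^ (-α))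
              ≤ ‖z‖^α * ‖z‖^(-α) := by
            calc β * (‖z‖^α * ∑' p : S, ‖z - (p : EuclideanSpace ℝ (Fin 2))‖ ^ (-α))
                = ‖z‖^α * (β * ∑' p : S, ‖z - (p : EuclideanSpace ℝ (Fin 2))‖ ^ (-α)) := by ring
              _ ≤ ‖z‖^α * ‖z‖^(-α) :=
                mul_le_mul_of_nonneg_left hcond (Real.rpow_nonneg (norm_nonneg _) _)
          rw [← Real.rpow_add hzpos, add_neg_cancel, Real.rpow_zero] at h6
          rw [le_div_iff₀ hβpos]
          linarith
        have := le_trans hR h5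
        rw [div_lt_iff₀ hβpos] at hβc
        have : c ≤ 1/β := this
        rw [le_div_iff₀ hβpos] at this
        linarith
  have hA_ne : A.Nonempty := ⟨rβ', hmem⟩
  have hA_bdd : BddAbove A := ⟨ub, hub⟩
  have hr_lb : rβ' ≤ sSup A := le_csSup hA_bdd hmem
  have hr_ub : sSup A ≤ ub := csSup_le hA_ne hub
  -- final computation
  have hβα : (0:ℝ) < β ^ (1/α) := Real.rpow_pos_of_pos hβpos _
  have hkey : ∀ T : ℝ, 0 < T → β ^ (1/α) * (β * T) ^ (-(1/α)) = T ^ (-(1/α)) := by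
    intro T hT
    rw [Real.mul_rpow hβpos.le hT.le, ← mul_assoc, ← Real.rpow_add hβpos,
      add_neg_cancel, Real.rpow_zero, one_mul]
  have hlow : ((1+η)*I0) ^ (-(1/α)) ≤ β ^ (1/α) * sSup A := by
    rw [← hkey _ hTpos]
    exact mul_le_mul_of_nonneg_left hr_lb hβα.le
  have hhigh : β ^ (1/α) * sSup A ≤ ((1-η)*I0) ^ (-(1/α)) := by
    rw [← hkey _ hTpos']
    exact mul_le_mul_of_nonneg_left hr_ub hβα.le
  rw [Real.dist_eq, abs_lt]
  rw [Real.dist_eq, abs_lt] at hd1 hd2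
  constructor <;> [linarith [hd2.1]; linarith [hd1.2]]
end

section
/- Let d > 0 and let H = { m·((3/2)d, (√3/2)d) + n·((3/2)d, −(√3/2)d) + e·(d, 0) : m, n ∈ ℤ, e ∈ {0, 1} } ⊂ ℝ² be the hexagonal (honeycomb) grid with nearest-neighbor distance d. Let V = { z ∈ ℝ² : ‖z‖ ≤ ‖z − p‖ for every p ∈ H with p ≠ 0 } be the Voronoi cell of the origin (with the Euclidean norm). Then the area of V equals (3√3/4)d², and d is the greatest value of ‖z‖ over z ∈ V (it is attained and is an upper bound). Consequently, with λ = 4/(3√3 d²) and r_λ = d, the normalized maximum transmission range is r₁ = √λ · r_λ = 2/√(3√3). -/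
/-!
The condition `‖z‖ ≤ ‖z - p‖` is a half-plane, so the Voronoi cell `V` is convex. The three
nearest grid points `(d, 0)`, `(-d/2, ±√3 d/2)` cut `V` down to the equilateral triangle whose
vertices are the centres of the three hexagons around the origin. Conversely, these centres are
at distance exactly `d` from the origin and at distance at least `d` from every grid point, so
they lie in `V`, and by convexity so does the whole triangle. The same vertices show that `d` is
the largest norm on the triangle, and its area is an elementary integral.
-/

open Real MeasureTheory Set

section VoronoiCell

variable {E : Type*} [NormedAddCommGroup E] [InnerProductSpace ℝ E]

def voronoiCell (S : Set E) : Set E := {z | ∀ p ∈ S, p ≠ 0 → ‖z‖ ≤ ‖z - p‖}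

theorem norm_le_norm_sub_iff (z p : E) : ‖z‖ ≤ ‖z - p‖ ↔ 2 * inner ℝ z p ≤ ‖p‖ ^ 2 := by
  rw [← sq_le_sq₀ (norm_nonneg _) (norm_nonneg _), norm_sub_sq_real]
  constructor <;> intro h <;> linarith

theorem convex_setOf_norm_le_norm_sub (p : E) : Convex ℝ {z : E | ‖z‖ ≤ ‖z - p‖} := by
  intro x hx y hy a b ha hb hab
  simp only [mem_ofPred_eq, norm_le_norm_sub_iff, inner_add_left, real_inner_smul_left] at *
  nlinarith

theorem convex_voronoiCell (S : Set E) : Convex ℝ (voronoiCell S) :=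
  fun _ hx _ hy _ _ ha hb hab p hp hp0 =>
    convex_setOf_norm_le_norm_sub p (hx p hp hp0) (hy p hp hp0) ha hb hab

end VoronoiCell

theorem Convex.smul_add_smul_add_smul_mem {E : Type*} [AddCommGroup E] [Module ℝ E] {s : Set E}
    (hs : Convex ℝ s) {a b c : E} (ha : a ∈ s) (hb : b ∈ s) (hc : c ∈ s) {α β γ : ℝ}
    (hα : 0 ≤ α) (hβ : 0 ≤ β) (hγ : 0 ≤ γ) (h : α + β + γ = 1) :
    α • a + β • b + γ • c ∈ s := by
  simpa [Fin.sum_univ_three] using hs.sum_mem (t := Finset.univ) (w := ![α, β, γ])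
    (z := ![a, b, c]) (by simp [Fin.forall_fin_succ, *]) (by simp [Fin.sum_univ_three, h])
    (by simp [Fin.forall_fin_succ, *])

theorem EuclideanSpace.norm_sq_fin_two (z : EuclideanSpace ℝ (Fin 2)) :
    ‖z‖ ^ 2 = z 0 ^ 2 + z 1 ^ 2 := by
  simp [EuclideanSpace.real_norm_sq_eq, Fin.sum_univ_two]

theorem EuclideanSpace.inner_fin_two (z w : EuclideanSpace ℝ (Fin 2)) :
    inner ℝ z w = z 0 * w 0 + z 1 * w 1 := by
  simp [PiLp.inner_apply, Fin.sum_univ_two, mul_comm]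

theorem EuclideanSpace.volume_preimage_fin_two (S : Set (ℝ × ℝ)) :
    volume {z : EuclideanSpace ℝ (Fin 2) | (z 0, z 1) ∈ S} = volume S := by
  have : MeasurePreserving
      ((MeasurableEquiv.toLp 2 (Fin 2 → ℝ)).symm.trans MeasurableEquiv.finTwoArrow) :=
    (EuclideanSpace.volume_preserving_symm_measurableEquiv_toLp (Fin 2)).trans
      (volume_preserving_finTwoArrow ℝ)
  exact this.measure_preimage_equiv S

theorem volume_prod_setOf_mem_Icc {α : Type*} [MeasurableSpace α] {μ : Measure α} [SFinite μ]
    {f g : α → ℝ} (hf : Measurable f) (hg : Measurable g) {s : Set α} (hs : MeasurableSet s) :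
    μ.prod volume {p : α × ℝ | p.1 ∈ s ∧ p.2 ∈ Icc (f p.1) (g p.1)}
      = ∫⁻ x in s, ENNReal.ofReal (g x - f x) ∂μ := by
  rw [Measure.prod_apply (measurableSet_region_between_cc hf hg hs), ← lintegral_indicator hs]
  congr with x
  by_cases hx : x ∈ s
  · rw [indicator_of_mem hx, ← Real.volume_Icc]
    congr with y
    simp [hx]
  · simp [hx]

theorem sqrt_four_div_mul_sq_mul {a d : ℝ} (ha : 0 < a) (hd : 0 < d) :
    √(4 / (a * d ^ 2)) * d = 2 / √a := by
  rw [show 4 / (a * d ^ 2) = (2 / d) ^ 2 / a by field_simp; ring, sqrt_div' _ ha.le,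
    sqrt_sq (by positivity)]
  field_simp

def honeycomb (d : ℝ) : Set (EuclideanSpace ℝ (Fin 2)) :=
  {p : EuclideanSpace ℝ (Fin 2) |
      ∃ m n e : ℤ, (e = 0 ∨ e = 1) ∧
        p 0 = m * (3 / 2 * d) + n * (3 / 2 * d) + e * d ∧
        p 1 = m * (√3 / 2 * d) - n * (√3 / 2 * d)}

noncomputable def hexagonCentre (d : ℝ) (k l : ℤ) : EuclideanSpace ℝ (Fin 2) :=
  !₂[k * (3 / 2 * d) + l * (3 / 2 * d) - d, k * (√3 / 2 * d) - l * (√3 / 2 * d)]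

/-- `3 * (m + n) + 2 * e + 2` is prime to `3`, and it is even when `m = n`. -/
theorem four_le_sq_add_three_mul_sq {m n e : ℤ} (he : e = 0 ∨ e = 1) :
    4 ≤ (3 * (m + n) + 2 * e + 2) ^ 2 + 3 * (m - n) ^ 2 := by
  rcases (by omega : (2 ≤ 3 * (m + n) + 2 * e + 2 ∨ 3 * (m + n) + 2 * e + 2 ≤ -2) ∨
      ((1 ≤ 3 * (m + n) + 2 * e + 2 ∨ 3 * (m + n) + 2 * e + 2 ≤ -1) ∧
        (1 ≤ m - n ∨ m - n ≤ -1)))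
    with (h | h) | ⟨h | h, h' | h'⟩ <;> nlinarith

theorem norm_hexagonCentre_sub_sq (d : ℝ) (k l m n e : ℤ) {p : EuclideanSpace ℝ (Fin 2)}
    (hp₀ : p 0 = m * (3 / 2 * d) + n * (3 / 2 * d) + e * d)
    (hp₁ : p 1 = m * (√3 / 2 * d) - n * (√3 / 2 * d)) :
    ‖hexagonCentre d k l - p‖ ^ 2
      = d ^ 2 / 4 * ((3 * (m - k + (n - l)) + 2 * e + 2) ^ 2 + 3 * (m - k - (n - l)) ^ 2) := by
  have hs : √3 ^ 2 = 3 := sq_sqrt (by norm_num)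
  simp only [EuclideanSpace.norm_sq_fin_two, hexagonCentre, PiLp.sub_apply, hp₀, hp₁,
    Matrix.cons_val_zero, Matrix.cons_val_one]
  linear_combination (d ^ 2 / 4 * (k - l - m + n) ^ 2) * hs

theorem le_norm_hexagonCentre_sub {d : ℝ} (hd : 0 < d) (k l : ℤ)
    {p : EuclideanSpace ℝ (Fin 2)} (hp : p ∈ honeycomb d) : d ≤ ‖hexagonCentre d k l - p‖ := by
  obtain ⟨m, n, e, he, hp₀, hp₁⟩ := hp
  have key : (4 : ℝ) ≤ (3 * (m - k + (n - l)) + 2 * e + 2) ^ 2 + 3 * (m - k - (n - l)) ^ 2 := by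
    exact_mod_cast four_le_sq_add_three_mul_sq (m := m - k) (n := n - l) he
  rw [← sq_le_sq₀ hd.le (norm_nonneg _), norm_hexagonCentre_sub_sq d k l m n e hp₀ hp₁]
  nlinarith

theorem norm_hexagonCentre {d : ℝ} (hd : 0 ≤ d) {k l : ℤ}
    (hkl : (3 * (k + l) - 2) ^ 2 + 3 * (k - l) ^ 2 = 4) : ‖hexagonCentre d k l‖ = d := by
  have hkl' : ((3 * (k + l) - 2) ^ 2 + 3 * (k - l) ^ 2 : ℝ) = 4 := by exact_mod_cast hkl
  have := norm_hexagonCentre_sub_sq d k l 0 0 0 (p := 0) (by simp) (by simp)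
  rw [sub_zero] at this
  rw [← sq_eq_sq₀ (norm_nonneg _) hd, this]
  push_cast
  linear_combination d ^ 2 / 4 * hkl'

def voronoiTriangle (d : ℝ) : Set (EuclideanSpace ℝ (Fin 2)) :=
  {z | z 0 ≤ d / 2 ∧ √3 * z 1 ≤ d + z 0 ∧ -(√3 * z 1) ≤ d + z 0}

theorem voronoiTriangle_subset_convexHull {d : ℝ} (hd : 0 < d) :
    voronoiTriangle d ⊆
      convexHull ℝ {hexagonCentre d 0 0, hexagonCentre d 1 0, hexagonCentre d 0 1} := by
  rintro z ⟨h₁, h₂, h₃⟩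
  -- barycentric coordinates: the three defining constraints, scaled to sum to `1`
  have hz : z = ((d - 2 * z 0) / (3 * d)) • hexagonCentre d 0 0
      + ((d + z 0 + √3 * z 1) / (3 * d)) • hexagonCentre d 1 0
      + ((d + z 0 - √3 * z 1) / (3 * d)) • hexagonCentre d 0 1 := by
    have hs : √3 * √3 = 3 := mul_self_sqrt (by norm_num)
    ext i; fin_cases i <;> simp [hexagonCentre] <;> field_simp
    · ring
    · linear_combination (-2 * z 1) * hs
  rw [hz]
  apply (convex_convexHull ℝ _).smul_add_smul_add_smul_mem
    (subset_convexHull ℝ _ (by simp)) (subset_convexHull ℝ _ (by simp))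
    (subset_convexHull ℝ _ (by simp))
  · exact div_nonneg (by linarith) (by positivity)
  · exact div_nonneg (by linarith) (by positivity)
  · exact div_nonneg (by linarith) (by positivity)
  · field_simp; ring

theorem voronoiTriangle_subset_voronoiCell {d : ℝ} (hd : 0 < d) :
    voronoiTriangle d ⊆ voronoiCell (honeycomb d) := by
  refine (voronoiTriangle_subset_convexHull hd).trans (convexHull_min ?_ (convex_voronoiCell _))
  rintro c (rfl | rfl | rfl) p hp - <;>
    exact (norm_hexagonCentre hd.le (by norm_num)).trans_le (le_norm_hexagonCentre_sub hd _ _ hp)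

theorem voronoiTriangle_subset_closedBall {d : ℝ} (hd : 0 < d) :
    voronoiTriangle d ⊆ Metric.closedBall 0 d := by
  refine (voronoiTriangle_subset_convexHull hd).trans (convexHull_min ?_ (convex_closedBall 0 d))
  rintro c (rfl | rfl | rfl) <;>
    exact mem_closedBall_zero_iff.mpr (norm_hexagonCentre hd.le (by norm_num)).le

theorem voronoiCell_honeycomb_subset {d : ℝ} (hd : 0 < d) :
    voronoiCell (honeycomb d) ⊆ voronoiTriangle d := by
  intro z hz
  have hs : √3 ^ 2 = 3 := sq_sqrt (by norm_num)
  have bisector : ∀ a b : ℝ, !₂[a, b] ∈ honeycomb d → a ≠ 0 →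
      2 * (z 0 * a + z 1 * b) ≤ a ^ 2 + b ^ 2 := fun a b hp ha => by
    have := hz _ hp fun h => ha (by simpa using congrArg (· 0) h)
    simpa [norm_le_norm_sub_iff, EuclideanSpace.norm_sq_fin_two, EuclideanSpace.inner_fin_two]
      using this
  have h₁ := bisector d 0 ⟨0, 0, 1, by simp⟩ hd.ne'
  have h₂ := bisector (-(d / 2)) (√3 * d / 2)
    ⟨0, -1, 1, by norm_num; ring_nf; simp⟩ (by linarith)
  have h₃ := bisector (-(d / 2)) (-(√3 * d / 2))
    ⟨-1, 0, 1, by norm_num; ring_nf; simp⟩ (by linarith)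
  refine ⟨?_, ?_, ?_⟩ <;> nlinarith

theorem voronoiCell_honeycomb {d : ℝ} (hd : 0 < d) :
    voronoiCell (honeycomb d) = voronoiTriangle d :=
  (voronoiCell_honeycomb_subset hd).antisymm (voronoiTriangle_subset_voronoiCell hd)

theorem isGreatest_norm_voronoiTriangle {d : ℝ} (hd : 0 < d) :
    IsGreatest ((‖·‖) '' voronoiTriangle d) d := by
  refine ⟨⟨hexagonCentre d 1 0, ?_, norm_hexagonCentre hd.le (by norm_num)⟩, ?_⟩
  · have hs : √3 * √3 = 3 := mul_self_sqrt (by norm_num)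
    refine ⟨?_, ?_, ?_⟩ <;> simp [hexagonCentre] <;> nlinarith [sqrt_nonneg 3]
  · rintro _ ⟨z, hz, rfl⟩
    simpa using voronoiTriangle_subset_closedBall hd hz

theorem volume_voronoiTriangle {d : ℝ} (hd : 0 < d) :
    volume (voronoiTriangle d) = ENNReal.ofReal (3 * √3 / 4 * d ^ 2) := by
  have hs₀ : 0 < √3 := by positivity
  have hs : √3 * √3 = 3 := mul_self_sqrt (by norm_num)
  have hT : voronoiTriangle d = {z | (z 0, z 1) ∈ {q : ℝ × ℝ |
      q.1 ∈ Icc (-d) (d / 2) ∧ q.2 ∈ Icc (-((d + q.1) / √3)) ((d + q.1) / √3)}} := by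
    ext z
    simp only [voronoiTriangle, mem_ofPred_eq, mem_Icc, neg_le, le_div_iff₀ hs₀]
    constructor
    · rintro ⟨h₁, h₂, h₃⟩
      exact ⟨⟨by linarith, h₁⟩, by linarith, by linarith⟩
    · rintro ⟨⟨-, h₁⟩, h₂, h₃⟩
      exact ⟨h₁, by linarith, by linarith⟩
  have hwidth : ∀ x ∈ Icc (-d) (d / 2), 0 ≤ (d + x) / √3 - -((d + x) / √3) := fun x hx => by
    have : 0 ≤ (d + x) / √3 := div_nonneg (by linarith [hx.1]) hs₀.le
    linarith
  rw [hT, EuclideanSpace.volume_preimage_fin_two, Measure.volume_eq_prod,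
    volume_prod_setOf_mem_Icc (f := fun x ↦ -((d + x) / √3)) (g := fun x ↦ (d + x) / √3)
      (by fun_prop) (by fun_prop) measurableSet_Icc,
    ← ofReal_integral_eq_lintegral_ofReal (Continuous.integrableOn_Icc (by fun_prop))
      ((ae_restrict_mem measurableSet_Icc).mono hwidth),
    integral_Icc_eq_integral_Ioc, ← intervalIntegral.integral_of_le (by linarith)]
  congr 1
  simp only [sub_neg_eq_add, ← two_mul, ← mul_div_assoc]
  rw [intervalIntegral.integral_div, intervalIntegral.integral_const_mul,
    intervalIntegral.integral_comp_add_left (fun x => x), integral_id, div_eq_iff hs₀.ne']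
  linear_combination (-(3 / 4) * d ^ 2) * hs

/-- For the hexagonal (honeycomb) grid `H` with nearest-neighbor distance `d`, the
Voronoi cell `V` of the origin has area `(3√3/4)d²`, the greatest distance from the
origin to a point of `V` is `d`, and the normalized maximum transmission range is
`r₁ = √λ · r_λ = 2/√(3√3)` with `λ = 4/(3√3 d²)`, `r_λ = d`. -/
theorem hexagonal_grid_voronoi (d : ℝ) (hd : 0 < d)
    (H V : Set (EuclideanSpace ℝ (Fin 2)))
    (hH : H = {p : EuclideanSpace ℝ (Fin 2) |
      ∃ m n e : ℤ, (e = 0 ∨ e = 1) ∧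
        p 0 = m * (3 / 2 * d) + n * (3 / 2 * d) + e * d ∧
        p 1 = m * (Real.sqrt 3 / 2 * d) - n * (Real.sqrt 3 / 2 * d)})
    (hV : V = {z : EuclideanSpace ℝ (Fin 2) | ∀ p ∈ H, p ≠ 0 → ‖z‖ ≤ ‖z - p‖}) :
    volume V = ENNReal.ofReal (3 * Real.sqrt 3 / 4 * d ^ 2) ∧
    IsGreatest ((fun z : EuclideanSpace ℝ (Fin 2) => ‖z‖) '' V) d ∧
    Real.sqrt (4 / (3 * Real.sqrt 3 * d ^ 2)) * d = 2 / Real.sqrt (3 * Real.sqrt 3) := by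
  have hVT : V = voronoiTriangle d := by
    rw [← voronoiCell_honeycomb hd, hV, hH]
    rfl
  rw [hVT]
  exact ⟨volume_voronoiTriangle hd, isGreatest_norm_voronoiTriangle hd,
    sqrt_four_div_mul_sq_mul (by positivity) hd⟩
end
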